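/- Let Y : [0,T] → [0,∞) be C¹ and satisfy Y'(t) ≤ −δ Y(t)^{p/(p−1)} + A Y(t) + B for constants δ > 0, A, B ≥ 0 and p > 1. Then there exists a constant C = C(T, δ, A, B, p), independent of Y(0), such that Y(t) ≤ C t^{1−p} for all t ∈ (0, T]. -/

import Mathlib

open Real Set Filter Topology

/-!
The barrier `Z t = K t^{1-p} + M` is a strict supersolution of `Z' = -δ Z^q + A Z + B`,
`q = p/(p-1)`, on `(0, T]` once `K` and `M` are large, depending only on `T, δ, A, B, p`:
the exponent `1 - p` makes `Z'` and `(K t^{1-p})^q` both scale like `t^{-p}`, and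
`δ K^q` beats `(p - 1 + A T) K` for large `K`. Since `Z` blows up at `0` while `Y` is bounded
on `[0, T]`, `Y` starts below `Z` near `0` and can never cross it. Finally
`Z t ≤ (K + M T^{p-1}) t^{1-p}`.
-/

theorem eventually_mul_add_lt_mul_rpow {δ q : ℝ} (hδ : 0 < δ) (hq : 1 < q) (a b : ℝ) :
    ∀ᶠ x in atTop, a * x + b < δ * x ^ q := by
  have hpow : ∀ᶠ x in atTop, (|a| + |b|) / δ < x ^ (q - 1) :=
    (tendsto_rpow_atTop (by linarith)).eventually_gt_atTop _
  filter_upwards [hpow, eventually_ge_atTop 1] with x hx hx1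
  have hx0 : 0 < x := by linarith
  have hsplit : x ^ q = x ^ (q - 1) * x := by
    rw [← rpow_add_one hx0.ne']; ring_nf
  rw [div_lt_iff₀ hδ] at hx
  calc a * x + b ≤ (|a| + |b|) * x := by
        nlinarith [le_abs_self a, le_abs_self b, abs_nonneg a, abs_nonneg b]
    _ < δ * x ^ (q - 1) * x := by nlinarith
    _ = δ * x ^ q := by rw [hsplit]; ring

noncomputable def barrier (K M p t : ℝ) : ℝ := K * t ^ (1 - p) + M

theorem hasDerivAt_barrier (K M p : ℝ) {t : ℝ} (ht : t ≠ 0) :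
    HasDerivAt (barrier K M p) (K * (1 - p) * t ^ (-p)) t := by
  have h := ((hasDerivAt_rpow_const (p := 1 - p) (Or.inl ht)).const_mul K).add_const M
  rw [show 1 - p - 1 = -p by ring, ← mul_assoc] at h
  exact h

theorem tendsto_barrier_nhdsGT_zero {K p : ℝ} (hK : 0 < K) (hp : 1 < p) (M : ℝ) :
    Tendsto (barrier K M p) (𝓝[>] 0) atTop :=
  tendsto_atTop_add_const_right _ M
    ((tendsto_rpow_neg_nhdsGT_zero (by linarith)).const_mul_atTop hK)

theorem barrier_le_mul_rpow {K M p T t : ℝ} (hM : 0 ≤ M) (hp : 1 ≤ p) (ht : t ∈ Ioc 0 T) :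
    barrier K M p t ≤ (K + M * T ^ (p - 1)) * t ^ (1 - p) := by
  obtain ⟨ht0, htT⟩ := ht
  have hcancel : t ^ (p - 1) * t ^ (1 - p) = 1 := by
    rw [← rpow_add ht0]; simp
  have hmono : t ^ (p - 1) ≤ T ^ (p - 1) := rpow_le_rpow ht0.le htT (by linarith)
  calc barrier K M p t = K * t ^ (1 - p) + M * t ^ (p - 1) * t ^ (1 - p) := by
        rw [barrier, mul_assoc M, hcancel, mul_one]
    _ ≤ K * t ^ (1 - p) + M * T ^ (p - 1) * t ^ (1 - p) := by gcongr
    _ = (K + M * T ^ (p - 1)) * t ^ (1 - p) := by ring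

theorem barrier_strict_supersolution {δ A B p K M T r : ℝ} (hδ : 0 ≤ δ) (hA : 0 ≤ A)
    (hp : 1 < p) (hK0 : 0 ≤ K) (hM0 : 0 ≤ M)
    (hK : (p - 1 + A * T) * K < δ * K ^ (p / (p - 1)))
    (hM : A * M + B ≤ δ * M ^ (p / (p - 1))) (hr : r ∈ Ioc 0 T) :
    -δ * barrier K M p r ^ (p / (p - 1)) + A * barrier K M p r + B < K * (1 - p) * r ^ (-p) := by
  obtain ⟨hr0, hrT⟩ := hr
  set q := p / (p - 1)
  have hp1 : 0 < p - 1 := by linarith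
  have hq : 1 ≤ q := (one_le_div hp1).mpr (by linarith)
  have hexp : (1 - p) * q = -p := by simp only [q]; field_simp; ring
  set u := K * r ^ (1 - p) with hu_def
  have hu0 : 0 ≤ u := by positivity
  have hrp : 0 < r ^ (-p) := rpow_pos_of_pos hr0 _
  have huq : u ^ q = K ^ q * r ^ (-p) := by
    rw [mul_rpow hK0 (rpow_nonneg hr0.le _), ← rpow_mul hr0.le, hexp]
  have hu : u = r * (K * r ^ (-p)) := by
    rw [hu_def, show 1 - p = 1 + -p by ring, rpow_add hr0, rpow_one]; ring
  have hsuper : δ * u ^ q + δ * M ^ q ≤ δ * (u + M) ^ q := by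
    rw [← mul_add]; exact mul_le_mul_of_nonneg_left (add_rpow_le_rpow_add hu0 hM0 hq) hδ
  have hAu : A * u ≤ A * T * (K * r ^ (-p)) := by
    rw [hu, ← mul_assoc]; gcongr
  have hgap : r ^ (-p) * ((p - 1 + A * T) * K) < r ^ (-p) * (δ * K ^ q) :=
    mul_lt_mul_of_pos_left hK hrp
  calc -δ * (u + M) ^ q + A * (u + M) + B
      ≤ -δ * u ^ q + A * u + (A * M + B - δ * M ^ q) := by linarith
    _ ≤ r ^ (-p) * (A * T * K - δ * K ^ q) := by rw [huq]; linarith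
    _ < K * (1 - p) * r ^ (-p) := by linarith

theorem le_of_strict_supersolution {F : ℝ → ℝ → ℝ} {Y Y' Z Z' : ℝ → ℝ} {T : ℝ}
    (hY : ∀ t ∈ Icc 0 T, HasDerivAt Y (Y' t) t) (hYF : ∀ t ∈ Icc 0 T, Y' t ≤ F t (Y t))
    (hZ : ∀ t ∈ Ioc 0 T, HasDerivAt Z (Z' t) t) (hZF : ∀ t ∈ Ioc 0 T, F t (Z t) < Z' t)
    (hZ0 : Tendsto Z (𝓝[>] 0) atTop) :
    ∀ s ∈ Ioc 0 T, Y s ≤ Z s := by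
  intro s ⟨hs0, hsT⟩
  obtain ⟨N, hN⟩ := (isCompact_Icc (a := 0) (b := T)).bddAbove_image
    fun t ht => (hY t ht).continuousAt.continuousWithinAt
  obtain ⟨t₀, hZt₀, ht₀0, ht₀s⟩ :=
    ((hZ0.eventually_ge_atTop N).and (Ioc_mem_nhdsGT hs0)).exists
  have hsub : Icc t₀ s ⊆ Ioc 0 T := fun t ht => ⟨ht₀0.trans_le ht.1, ht.2.trans hsT⟩
  have hsub' : Icc t₀ s ⊆ Icc 0 T := hsub.trans Ioc_subset_Icc_self
  refine image_le_of_deriv_right_lt_deriv_boundary'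
    (fun t ht => (hY t (hsub' ht)).continuousAt.continuousWithinAt)
    (fun t ht => (hY t (hsub' (Ico_subset_Icc_self ht))).hasDerivWithinAt)
    ((hN (mem_image_of_mem Y ⟨ht₀0.le, ht₀s.trans hsT⟩)).trans hZt₀)
    (fun t ht => (hZ t (hsub ht)).continuousAt.continuousWithinAt)
    (fun t ht => (hZ t (hsub (Ico_subset_Icc_self ht))).hasDerivWithinAt)
    (fun t ht hYZ => ?_) ⟨ht₀s, le_rfl⟩
  have ht := hsub (Ico_subset_Icc_self ht)
  calc Y' t ≤ F t (Y t) := hYF t (Ioc_subset_Icc_self ht)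
    _ = F t (Z t) := by rw [hYZ]
    _ < Z' t := hZF t ht

theorem ode_regularizing_general
    (T δ A B p : ℝ) (hδ : 0 < δ) (hA : 0 ≤ A) (hp : 1 < p) :
    ∃ C : ℝ, ∀ (Y Y' : ℝ → ℝ),
      (∀ t ∈ Icc 0 T, 0 ≤ Y t) →
      (∀ t ∈ Icc 0 T, HasDerivAt Y (Y' t) t) →
      (∀ t ∈ Icc 0 T, Y' t ≤ -δ * Y t ^ (p / (p - 1)) + A * Y t + B) →
      ∀ t ∈ Ioc 0 T, Y t ≤ C * t ^ (1 - p) := by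
  have hq : 1 < p / (p - 1) := (one_lt_div (by linarith)).mpr (by linarith)
  obtain ⟨M, hM0, hM⟩ :=
    ((eventually_ge_atTop 0).and (eventually_mul_add_lt_mul_rpow hδ hq A B)).exists
  obtain ⟨K, hK0, hK⟩ := ((eventually_gt_atTop 0).and
    (eventually_mul_add_lt_mul_rpow hδ hq (p - 1 + A * T) 0)).exists
  rw [add_zero] at hK
  refine ⟨K + M * T ^ (p - 1), fun Y Y' _ hY hYF t ht => ?_⟩
  calc Y t ≤ barrier K M p t :=
        le_of_strict_supersolution (F := fun t y => -δ * y ^ (p / (p - 1)) + A * y + B)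
          hY hYF (fun r hr => hasDerivAt_barrier K M p hr.1.ne')
          (fun r hr => barrier_strict_supersolution hδ.le hA hp hK0.le hM0 hK hM.le hr)
          (tendsto_barrier_nhdsGT_zero hK0 hp M) t ht
    _ ≤ (K + M * T ^ (p - 1)) * t ^ (1 - p) := barrier_le_mul_rpow hM0 hp.le ht

/-- ODE lemma for regularizing effects: a nonnegative `C¹` quantity satisfying
`Y' ≤ -δ Y^{p/(p-1)} + A Y + B` obeys `Y(t) ≤ C t^{1-p}` with `C` independent of `Y(0)`. -/
theorem ode_regularizing
    (T δ A B p : ℝ) (hT : 0 < T) (hδ : 0 < δ) (hA : 0 ≤ A) (hB : 0 ≤ B) (hp : 1 < p) :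
    ∃ C : ℝ, ∀ (Y Y' : ℝ → ℝ),
      (∀ t ∈ Icc 0 T, 0 ≤ Y t) →
      (∀ t ∈ Icc 0 T, HasDerivAt Y (Y' t) t) →
      (∀ t ∈ Icc 0 T, Y' t ≤ -δ * Y t ^ (p / (p - 1)) + A * Y t + B) →
      ∀ t ∈ Ioc 0 T, Y t ≤ C * t ^ (1 - p) :=
  ode_regularizing_general T δ A B p hδ hA hp
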